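/- Let Γ be a closed subset of R^n with finitely many connected components, each bounded. Fix H, a diffeomorphism class. For 0 < r < R, let N(Γ,H;R) be the number of connected components of Γ contained in the closed ball B(0,R) and of class H, let N(Γ,H;r,u) be the number of components of Γ contained in B(u,r) of class H, and let N*(Γ,H;r,u) be the number of components of class H intersecting the closed ball of radius r around u. Then (1/Vol B(r)) ∫_{B(0,R−r)} N(Γ,H;r,u) du ≤ N(Γ,H;R) ≤ (1/Vol B(r)) ∫_{B(0,R+r)} N*(Γ,H;r,u) du. -/

import Mathlib

open Metric MeasureTheory

/-- `γ` is a connected component of `Γ`. -/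
def IsCompOf {E : Type*} [TopologicalSpace E] (Γ γ : Set E) : Prop :=
  ∃ x ∈ Γ, γ = connectedComponentIn Γ x

/-- Number of components of `Γ` of class `H` contained in the closed ball `B(0,R)`. -/
noncomputable def NClosed (n : ℕ) (Γ : Set (EuclideanSpace ℝ (Fin n)))
    (H : Set (Set (EuclideanSpace ℝ (Fin n)))) (R : ℝ) : ℕ :=
  Nat.card {γ : Set (EuclideanSpace ℝ (Fin n)) //
    IsCompOf Γ γ ∧ γ ∈ H ∧ γ ⊆ closedBall (0 : EuclideanSpace ℝ (Fin n)) R}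

/-- Number of components of `Γ` of class `H` contained in the open ball `B(u,r)`. -/
noncomputable def NIn (n : ℕ) (Γ : Set (EuclideanSpace ℝ (Fin n)))
    (H : Set (Set (EuclideanSpace ℝ (Fin n)))) (r : ℝ) (u : EuclideanSpace ℝ (Fin n)) : ℕ :=
  Nat.card {γ : Set (EuclideanSpace ℝ (Fin n)) // IsCompOf Γ γ ∧ γ ∈ H ∧ γ ⊆ ball u r}

/-- Number of components of `Γ` of class `H` intersecting the closed ball of radius `r` about `u`. -/
noncomputable def NStar (n : ℕ) (Γ : Set (EuclideanSpace ℝ (Fin n)))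
    (H : Set (Set (EuclideanSpace ℝ (Fin n)))) (r : ℝ) (u : EuclideanSpace ℝ (Fin n)) : ℕ :=
  Nat.card {γ : Set (EuclideanSpace ℝ (Fin n)) //
    IsCompOf Γ γ ∧ γ ∈ H ∧ (γ ∩ closedBall u r).Nonempty}

open Finset
open scoped ENNReal

/-!
Let `T` be the finite set of components of class `H`. The counting functions are sums over `T`
of indicators: `N(Γ,H;r,u) = ∑ 1[u ∈ G_*(γ)]` and `N*(Γ,H;r,u) = ∑ 1[u ∈ G^*(γ)]`, so the two
integrals are `∑ Vol(G_*(γ) ∩ B(0,R-r))` and `∑ Vol(G^*(γ) ∩ B(0,R+r))`. For `v ∈ γ` we have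
`G_*(γ) ⊆ B(v,r) ⊆ G^*(γ)`; moreover `G_*(γ)` misses `B(0,R-r)` unless `γ ⊆ B̄(0,R)`, and then
`B(v,r) ⊆ B(0,R+r)`. So each term of the first sum is at most `Vol B(r)`, and is `0` unless `γ`
is counted by `N(Γ,H;R)`, while each counted `γ` contributes at least `Vol B(r)` to the second.
Components are compact, which makes `G_*(γ)` open and `G^*(γ)` closed, hence measurable.
-/

section Components

variable {E : Type*} [TopologicalSpace E] {Γ γ : Set E}

theorem IsCompOf.nonempty (h : IsCompOf Γ γ) : γ.Nonempty := by
  obtain ⟨x, hx, rfl⟩ := h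
  exact ⟨x, mem_connectedComponentIn hx⟩

theorem IsCompOf.isClosed (hΓ : IsClosed Γ) (h : IsCompOf Γ γ) : IsClosed γ := by
  obtain ⟨x, hx, rfl⟩ := h
  rw [connectedComponentIn_eq_image hx]
  exact hΓ.isClosedEmbedding_subtypeVal.isClosedMap _ isClosed_connectedComponent

theorem natCard_isCompOf_and_mem_and (hfin : {γ : Set E | IsCompOf Γ γ}.Finite)
    (H : Set (Set E)) [DecidablePred (· ∈ H)] (p : Set E → Prop) [DecidablePred p] :
    Nat.card {γ : Set E // IsCompOf Γ γ ∧ γ ∈ H ∧ p γ} =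
      #{γ ∈ hfin.toFinset.filter (· ∈ H) | p γ} := by
  rw [filter_filter, ← Nat.card_eq_finsetCard]
  exact Nat.card_congr <| Equiv.subtypeEquivRight fun γ => by simp

end Components

theorem setIntegral_natCast_card_filter_mem {X ι : Type*} [MeasurableSpace X] {μ : Measure X}
    {s : Set X} (hs : μ s ≠ ∞) (T : Finset ι) {G : ι → Set X}
    [∀ x, DecidablePred fun i => x ∈ G i] (hG : ∀ i ∈ T, MeasurableSet (G i)) :
    ∫ x in s, (#{i ∈ T | x ∈ G i} : ℝ) ∂μ = ∑ i ∈ T, μ.real (G i ∩ s) := by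
  have : IsFiniteMeasure (μ.restrict s) := isFiniteMeasure_restrict.2 hs
  rw [← sum_congr rfl fun i hi => (integral_indicator_one (μ := μ.restrict s) (hG i hi)).trans
      (measureReal_restrict_apply (hG i hi)),
    ← integral_finsetSum _ fun i hi => (integrable_const 1).indicator (hG i hi)]
  simp only [natCast_card_filter, Set.indicator_apply, Pi.one_apply]

section Centers

variable {E : Type*} [PseudoMetricSpace E] {γ : Set E} {v : E}

/-- `G_*(γ)`. -/
def centersContaining (γ : Set E) (r : ℝ) : Set E := {u | γ ⊆ ball u r}

/-- `G^*(γ)`. -/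
def centersMeeting (γ : Set E) (r : ℝ) : Set E := {u | (γ ∩ closedBall u r).Nonempty}

theorem centersContaining_subset_ball (hv : v ∈ γ) (r : ℝ) : centersContaining γ r ⊆ ball v r :=
  fun _ hu => mem_ball_comm.1 (hu hv)

theorem ball_subset_centersMeeting (hv : v ∈ γ) (r : ℝ) : ball v r ⊆ centersMeeting γ r :=
  fun _ hu => ⟨v, hv, mem_closedBall_comm.1 (ball_subset_closedBall hu)⟩

theorem subset_closedBall_of_mem_centersContaining {x u : E} {r R : ℝ}
    (hu : u ∈ ball x (R - r)) (hγ : u ∈ centersContaining γ r) : γ ⊆ closedBall x R :=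
  hγ.trans <| (ball_subset_ball' (by rw [mem_ball] at hu; linarith)).trans ball_subset_closedBall

theorem IsCompact.isOpen_centersContaining (hγ : IsCompact γ) (r : ℝ) :
    IsOpen (centersContaining γ r) := by
  refine isOpen_iff_eventually.2 fun u hu => hγ.eventually_forall_of_forall_eventually
    fun x hx => ?_
  exact (isOpen_lt (continuous_snd.dist continuous_fst) continuous_const).mem_nhds (hu hx)

theorem IsCompact.isClosed_centersMeeting (hγ : IsCompact γ) {r : ℝ} (hr : 0 ≤ r) :
    IsClosed (centersMeeting γ r) := by
  have : centersMeeting γ r = cthickening r γ := by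
    rw [hγ.cthickening_eq_biUnion_closedBall hr]
    ext u
    simp [centersMeeting, Set.Nonempty, dist_comm]
  exact this ▸ isClosed_cthickening

end Centers

section AddHaar

variable {E : Type*} [NormedAddCommGroup E] [MeasurableSpace E] [BorelSpace E] [ProperSpace E]
  (μ : Measure E) [μ.IsAddHaarMeasure] {T : Finset (Set E)} (x : E) (r R : ℝ)
  [DecidablePred fun γ : Set E => γ ⊆ closedBall x R]

theorem sum_measureReal_centersContaining_inter_ball_le (hT : ∀ γ ∈ T, γ.Nonempty) :
    ∑ γ ∈ T, μ.real (centersContaining γ r ∩ ball x (R - r))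
      ≤ #{γ ∈ T | γ ⊆ closedBall x R} * μ.real (ball 0 r) := by
  rw [← sum_filter_of_ne (p := (· ⊆ closedBall x R)) fun γ _ h => ?_]
  · calc _ ≤ ∑ γ ∈ T with γ ⊆ closedBall x R, μ.real (ball (0 : E) r) :=
          sum_le_sum fun γ hγ => ?_
      _ = _ := by rw [sum_const, nsmul_eq_mul]
    obtain ⟨v, hv⟩ := hT γ (mem_filter.1 hγ).1
    rw [← Measure.addHaar_real_ball_center μ v]
    exact measureReal_mono (Set.inter_subset_left.trans (centersContaining_subset_ball hv r))
      measure_ball_lt_top.ne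
  · obtain ⟨u, hu, hux⟩ := nonempty_of_measureReal_ne_zero h
    exact subset_closedBall_of_mem_centersContaining hux hu

theorem le_sum_measureReal_centersMeeting_inter_ball (hT : ∀ γ ∈ T, γ.Nonempty) :
    #{γ ∈ T | γ ⊆ closedBall x R} * μ.real (ball 0 r)
      ≤ ∑ γ ∈ T, μ.real (centersMeeting γ r ∩ ball x (R + r)) := by
  calc _ = ∑ γ ∈ T with γ ⊆ closedBall x R, μ.real (ball (0 : E) r) := by
          rw [sum_const, nsmul_eq_mul]
    _ ≤ ∑ γ ∈ T with γ ⊆ closedBall x R, μ.real (centersMeeting γ r ∩ ball x (R + r)) :=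
          sum_le_sum fun γ hγ => ?_
    _ ≤ _ := sum_le_sum_of_subset_of_nonneg (filter_subset _ _) fun _ _ _ => measureReal_nonneg
  obtain ⟨hγT, hγR⟩ := mem_filter.1 hγ
  obtain ⟨v, hv⟩ := hT γ hγT
  rw [← Measure.addHaar_real_ball_center μ v]
  refine measureReal_mono (Set.subset_inter (ball_subset_centersMeeting hv r)
    (ball_subset_ball' ?_)) ((measure_mono Set.inter_subset_right).trans_lt measure_ball_lt_top).ne
  linarith [mem_closedBall.1 (hγR hv)]

end AddHaar

theorem integral_geometric_sandwich_general (n : ℕ) (Γ : Set (EuclideanSpace ℝ (Fin n)))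
    (hclosed : IsClosed Γ) (hfin : {γ : Set (EuclideanSpace ℝ (Fin n)) | IsCompOf Γ γ}.Finite)
    (hbd : ∀ γ, IsCompOf Γ γ → Bornology.IsBounded γ)
    (H : Set (Set (EuclideanSpace ℝ (Fin n)))) (r R : ℝ) (hr : 0 < r) :
    (∫ u in ball (0 : EuclideanSpace ℝ (Fin n)) (R - r), (NIn n Γ H r u : ℝ)) /
        (volume (ball (0 : EuclideanSpace ℝ (Fin n)) r)).toReal
      ≤ (NClosed n Γ H R : ℝ) ∧
    (NClosed n Γ H R : ℝ)
      ≤ (∫ u in ball (0 : EuclideanSpace ℝ (Fin n)) (R + r), (NStar n Γ H r u : ℝ)) /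
          (volume (ball (0 : EuclideanSpace ℝ (Fin n)) r)).toReal := by
  classical
  set T := {γ ∈ hfin.toFinset | γ ∈ H}
  have hT : ∀ γ ∈ T, IsCompact γ ∧ γ.Nonempty := fun γ hγ => by
    have hγ : IsCompOf Γ γ := hfin.mem_toFinset.1 (mem_filter.1 hγ).1
    exact ⟨isCompact_of_isClosed_isBounded (hγ.isClosed hclosed) (hbd γ hγ), hγ.nonempty⟩
  have hIn : ∫ u in ball 0 (R - r), (NIn n Γ H r u : ℝ) =
      ∑ γ ∈ T, volume.real (centersContaining γ r ∩ ball 0 (R - r)) := by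
    simp only [NIn, natCard_isCompOf_and_mem_and hfin H]
    exact setIntegral_natCast_card_filter_mem measure_ball_lt_top.ne T fun γ hγ =>
      ((hT γ hγ).1.isOpen_centersContaining r).measurableSet
  have hStar : ∫ u in ball 0 (R + r), (NStar n Γ H r u : ℝ) =
      ∑ γ ∈ T, volume.real (centersMeeting γ r ∩ ball 0 (R + r)) := by
    simp only [NStar, natCard_isCompOf_and_mem_and hfin H]
    exact setIntegral_natCast_card_filter_mem measure_ball_lt_top.ne T fun γ hγ =>
      ((hT γ hγ).1.isClosed_centersMeeting hr.le).measurableSet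
  have hN : NClosed n Γ H R = #{γ ∈ T | γ ⊆ closedBall 0 R} :=
    natCard_isCompOf_and_mem_and hfin H _
  have hc : 0 < volume.real (ball (0 : EuclideanSpace ℝ (Fin n)) r) :=
    ENNReal.toReal_pos (measure_ball_pos volume 0 hr).ne' measure_ball_lt_top.ne
  rw [← measureReal_def, hIn, hStar, hN, div_le_iff₀ hc, le_div_iff₀ hc]
  exact ⟨sum_measureReal_centersContaining_inter_ball_le volume 0 r R fun γ hγ => (hT γ hγ).2,
    le_sum_measureReal_centersMeeting_inter_ball volume 0 r R fun γ hγ => (hT γ hγ).2⟩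

/-- The integral-geometric sandwich: for a closed set `Γ` with finitely many bounded
components and `0 < r < R`,
`(1/Vol B(r)) ∫_{B(0,R−r)} N(Γ,H;r,u) du ≤ N(Γ,H;R)
  ≤ (1/Vol B(r)) ∫_{B(0,R+r)} N*(Γ,H;r,u) du`. -/
theorem integral_geometric_sandwich (n : ℕ) (Γ : Set (EuclideanSpace ℝ (Fin n)))
    (hclosed : IsClosed Γ) (hfin : {γ : Set (EuclideanSpace ℝ (Fin n)) | IsCompOf Γ γ}.Finite)
    (hbd : ∀ γ, IsCompOf Γ γ → Bornology.IsBounded γ)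
    (H : Set (Set (EuclideanSpace ℝ (Fin n)))) (r R : ℝ) (hr : 0 < r) (hrR : r < R) :
    (∫ u in ball (0 : EuclideanSpace ℝ (Fin n)) (R - r), (NIn n Γ H r u : ℝ)) /
        (volume (ball (0 : EuclideanSpace ℝ (Fin n)) r)).toReal
      ≤ (NClosed n Γ H R : ℝ) ∧
    (NClosed n Γ H R : ℝ)
      ≤ (∫ u in ball (0 : EuclideanSpace ℝ (Fin n)) (R + r), (NStar n Γ H r u : ℝ)) /
          (volume (ball (0 : EuclideanSpace ℝ (Fin n)) r)).toReal :=
  integral_geometric_sandwich_general n Γ hclosed hfin hbd H r R hr
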